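/- Let b ∈ (1,3) and suppose ŵ, ẑ : ℝ³ → ℂ satisfy |ŵ(η)| ≤ A|η|^{-2} and |ẑ(η)| ≤ B|η|^{-b} for a.e. η. Then for every ξ ≠ 0, the convolution satisfies |∫_{ℝ³} ŵ(η) ẑ(ξ-η) dη| ≤ C(b) A B |ξ|^{1-b}, and consequently the function ξ ↦ (iξ/|ξ|²) P̂(ξ) ∫ ŵ(η) ẑ(ξ-η) dη satisfies the bound |ξ|^b |(iξ/|ξ|²) P̂(ξ) ∫ ŵ(η)ẑ(ξ-η)dη| ≤ C'(b) A B, where P̂(ξ) is the Leray projector symbol with entries bounded by 1. -/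

import Mathlib

open MeasureTheory Set Metric

noncomputable abbrev E3 := EuclideanSpace ℝ (Fin 3)

lemma dim3 : Module.finrank ℝ E3 = 3 := by simp [finrank_euclideanSpace]

lemma polar3 (f : ℝ → ENNReal) (hf : Measurable f) :
    ∫⁻ x : E3, f ‖x‖ = (volume : Measure E3).toSphere Set.univ *
      ∫⁻ y in Ioi (0:ℝ), ENNReal.ofReal (y ^ 2) * f y := by
  have h0 : (volume : Measure E3).restrict {(0:E3)}ᶜ = volume :=
    by simp
  have hd : Module.finrank ℝ E3 - 1 = 2 := by rw [dim3]
  have hfm : Measurable (f ∘ Subtype.val ∘ (Prod.snd :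
      Metric.sphere (0:E3) 1 × Ioi (0:ℝ) → Ioi (0:ℝ))) :=
    hf.comp (measurable_subtype_coe.comp measurable_snd)
  calc ∫⁻ x : E3, f ‖x‖ = ∫⁻ x : E3 in {(0:E3)}ᶜ, f ‖x‖ := by rw [h0]
    _ = ∫⁻ (x : ({(0:E3)}ᶜ : Set E3)), (fun x : E3 => f ‖x‖) x
        ∂((volume : Measure E3).comap Subtype.val) :=
      (lintegral_subtype_comap (measurableSet_singleton _).compl _).symm
    _ = ∫⁻ p : Metric.sphere (0:E3) 1 × Ioi (0:ℝ), (f ∘ Subtype.val ∘ Prod.snd) p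
        ∂(((volume : Measure E3).toSphere).prod (Measure.volumeIoiPow (Module.finrank ℝ E3 - 1))) :=
      by rw [← (Measure.measurePreserving_homeomorphUnitSphereProd
        (volume : Measure E3)).lintegral_comp hfm]; congr 1; funext x; simp
    _ = (volume : Measure E3).toSphere Set.univ *
        ∫⁻ y : Ioi (0:ℝ), f y ∂(Measure.volumeIoiPow (Module.finrank ℝ E3 - 1)) := by
      rw [MeasureTheory.lintegral_prod _ hfm.aemeasurable]
      simp [lintegral_const, mul_comm]
    _ = _ := by
      rw [hd, Measure.volumeIoiPow,
        lintegral_withDensity_eq_lintegral_mul _ (by fun_prop) (show Measurable fun y : (Ioi (0:ℝ)) => f ↑y from hf.comp measurable_subtype_coe),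
        ← lintegral_subtype_comap measurableSet_Ioi
          (fun y : ℝ => ENNReal.ofReal (y ^ 2) * f y)]
      rfl

noncomputable def kap : ENNReal := (volume : Measure E3).toSphere Set.univ

lemma kap_ne_top : kap ≠ ⊤ := measure_ne_top _ _

lemma ball_lint {p : ℝ} (hp : p ≠ 0) {R : ℝ} (hR : 0 < R) :
    ∫⁻ x : E3 in Metric.ball 0 R, ENNReal.ofReal (‖x‖ ^ p)
      = kap * ∫⁻ y in Set.Ioi (0:ℝ), ENNReal.ofReal (y ^ 2) *
          (if y < R then ENNReal.ofReal (y ^ p) else 0) := by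
  rw [← lintegral_indicator measurableSet_ball, kap, ← polar3 _ (by
    apply Measurable.ite measurableSet_Iio _ measurable_const
    fun_prop)]
  refine lintegral_congr fun x => ?_
  by_cases h : x ∈ Metric.ball (0:E3) R
  · rw [Set.indicator_of_mem h]
    rw [mem_ball_zero_iff] at h
    simp [h]
  · rw [Set.indicator_of_notMem h]
    rw [mem_ball_zero_iff, not_lt] at h
    simp [not_lt.mpr h]

lemma L2a {R : ℝ} (hR : 0 < R) :
    ∫⁻ x : E3 in Metric.ball 0 R, ENNReal.ofReal (‖x‖ ^ (-2:ℝ))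
      ≤ kap * ENNReal.ofReal R := by
  rw [ball_lint (by norm_num) hR]
  refine mul_le_mul_right ?_ _
  calc ∫⁻ y in Set.Ioi (0:ℝ), ENNReal.ofReal (y ^ 2) *
          (if y < R then ENNReal.ofReal (y ^ (-2:ℝ)) else 0)
      ≤ ∫⁻ y in Set.Ioi (0:ℝ), (Set.Ioo 0 R).indicator (fun _ => 1) y := by
        refine setLIntegral_mono (measurable_const.indicator measurableSet_Ioo) fun y hy => ?_
        rw [Set.mem_Ioi] at hy
        by_cases h : y < R
        · rw [if_pos h, Set.indicator_of_mem (Set.mem_Ioo.mpr ⟨hy, h⟩), ← ENNReal.ofReal_mul (by positivity)]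
          rw [show y ^ 2 * y ^ (-2:ℝ) = y ^ (2:ℝ) * y ^ (-2:ℝ) by rw [Real.rpow_two],
            ← Real.rpow_add hy]
          norm_num
        · rw [if_neg h, mul_zero]; exact zero_le
    _ ≤ ∫⁻ y, (Set.Ioo 0 R).indicator (fun _ => 1) y := setLIntegral_le_lintegral _ _
    _ = ENNReal.ofReal R := by
        rw [lintegral_indicator measurableSet_Ioo]
        simp [Real.volume_Ioo]

lemma L2b {c : ℝ} (hc1 : 1 < c) (hc3 : c < 3) {R : ℝ} (hR : 0 < R) :
    ∫⁻ x : E3 in Metric.ball 0 R, ENNReal.ofReal (‖x‖ ^ (-c))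
      ≤ kap * ENNReal.ofReal (R ^ (3 - c) / (3 - c)) := by
  rw [ball_lint (by intro h; rw [neg_eq_zero] at h; linarith) hR]
  refine mul_le_mul_right ?_ _
  have hint : IntegrableOn (fun y : ℝ => y ^ (2 - c)) (Set.Ioo 0 R) volume := by
    have := (intervalIntegral.intervalIntegrable_rpow' (a := 0) (b := R)
      (r := 2 - c) (by linarith)).1
    exact this.mono_set Set.Ioo_subset_Ioc_self
  calc ∫⁻ y in Set.Ioi (0:ℝ), ENNReal.ofReal (y ^ 2) *
          (if y < R then ENNReal.ofReal (y ^ (-c)) else 0)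
      ≤ ∫⁻ y in Set.Ioi (0:ℝ),
          (Set.Ioo 0 R).indicator (fun y => ENNReal.ofReal (y ^ (2 - c))) y := by
        refine setLIntegral_mono ((by fun_prop : Measurable fun y : ℝ =>
          ENNReal.ofReal (y ^ (2 - c))).indicator measurableSet_Ioo) fun y hy => ?_
        rw [Set.mem_Ioi] at hy
        by_cases h : y < R
        · rw [if_pos h, Set.indicator_of_mem (Set.mem_Ioo.mpr ⟨hy, h⟩),
            ← ENNReal.ofReal_mul (by positivity),
            show y ^ 2 * y ^ (-c) = y ^ (2:ℝ) * y ^ (-c) by rw [Real.rpow_two],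
            ← Real.rpow_add hy, show (2:ℝ) + -c = 2 - c by ring]
        · rw [if_neg h, mul_zero]; exact zero_le
    _ ≤ ∫⁻ y, (Set.Ioo 0 R).indicator (fun y => ENNReal.ofReal (y ^ (2 - c))) y :=
        setLIntegral_le_lintegral _ _
    _ = ∫⁻ y in Set.Ioo 0 R, ENNReal.ofReal (y ^ (2 - c)) :=
        lintegral_indicator measurableSet_Ioo _
    _ = ENNReal.ofReal (∫ y in Set.Ioo 0 R, y ^ (2 - c)) := by
        rw [ofReal_integral_eq_lintegral_ofReal hint]
        exact (ae_restrict_iff' measurableSet_Ioo).mpr (Filter.Eventually.of_forall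
          fun y hy => Real.rpow_nonneg hy.1.le _)
    _ ≤ ENNReal.ofReal (R ^ (3 - c) / (3 - c)) := by
        apply ENNReal.ofReal_le_ofReal
        rw [MeasureTheory.setIntegral_congr_set MeasureTheory.Ioo_ae_eq_Ioc,
          ← intervalIntegral.integral_of_le hR.le,
          integral_rpow (Or.inl (by linarith))]
        rw [Real.zero_rpow (by intro h; linarith [h, hc3] : (2 - c) + 1 ≠ 0)]
        rw [show (2 - c) + 1 = 3 - c by ring]
        simp

lemma L2c {c : ℝ} (hc1 : 1 < c) {R : ℝ} (hR : 0 < R) :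
    ∫⁻ x : E3 in (Metric.ball 0 R)ᶜ, ENNReal.ofReal (‖x‖ ^ (-(2 + c)))
      ≤ kap * ENNReal.ofReal (R ^ (1 - c) / (c - 1)) := by
  have hmain : ∫⁻ x : E3 in (Metric.ball 0 R)ᶜ, ENNReal.ofReal (‖x‖ ^ (-(2 + c)))
      = kap * ∫⁻ y in Set.Ioi (0:ℝ), ENNReal.ofReal (y ^ 2) *
          (if R ≤ y then ENNReal.ofReal (y ^ (-(2 + c))) else 0) := by
    rw [← lintegral_indicator measurableSet_ball.compl, kap, ← polar3 _ (by
      exact Measurable.ite measurableSet_Ici (by fun_prop) measurable_const)]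
    refine lintegral_congr fun x => ?_
    by_cases h : x ∈ (Metric.ball (0:E3) R)ᶜ
    · rw [Set.indicator_of_mem h]
      rw [Set.mem_compl_iff, mem_ball_zero_iff, not_lt] at h
      simp [h]
    · rw [Set.indicator_of_notMem h]
      rw [Set.notMem_compl_iff] at h
      rw [mem_ball_zero_iff] at h
      simp [not_le.mpr h]
  rw [hmain]
  refine mul_le_mul_right ?_ _
  have hint : IntegrableOn (fun y : ℝ => y ^ (-c)) (Set.Ioi R) volume :=
    integrableOn_Ioi_rpow_of_lt (by linarith) hR
  calc ∫⁻ y in Set.Ioi (0:ℝ), ENNReal.ofReal (y ^ 2) *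
          (if R ≤ y then ENNReal.ofReal (y ^ (-(2 + c))) else 0)
      ≤ ∫⁻ y in Set.Ioi (0:ℝ),
          (Set.Ici R).indicator (fun y => ENNReal.ofReal (y ^ (-c))) y := by
        refine setLIntegral_mono ((by fun_prop : Measurable fun y : ℝ =>
          ENNReal.ofReal (y ^ (-c))).indicator measurableSet_Ici) fun y hy => ?_
        rw [Set.mem_Ioi] at hy
        by_cases h : R ≤ y
        · rw [if_pos h, Set.indicator_of_mem (Set.mem_Ici.mpr h),
            ← ENNReal.ofReal_mul (by positivity),
            show y ^ 2 * y ^ (-(2 + c)) = y ^ (2:ℝ) * y ^ (-(2 + c)) by rw [Real.rpow_two],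
            ← Real.rpow_add hy, show (2:ℝ) + -(2 + c) = -c by ring]
        · rw [if_neg h, mul_zero]; exact zero_le
    _ ≤ ∫⁻ y, (Set.Ici R).indicator (fun y => ENNReal.ofReal (y ^ (-c))) y :=
        setLIntegral_le_lintegral _ _
    _ = ∫⁻ y in Set.Ici R, ENNReal.ofReal (y ^ (-c)) :=
        lintegral_indicator measurableSet_Ici _
    _ = ∫⁻ y in Set.Ioi R, ENNReal.ofReal (y ^ (-c)) :=
        (setLIntegral_congr MeasureTheory.Ioi_ae_eq_Ici).symm
    _ = ENNReal.ofReal (∫ y in Set.Ioi R, y ^ (-c)) := by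
        rw [ofReal_integral_eq_lintegral_ofReal hint]
        exact (ae_restrict_iff' measurableSet_Ioi).mpr (Filter.Eventually.of_forall
          fun y hy => Real.rpow_nonneg (le_trans hR.le (le_of_lt hy)) _)
    _ ≤ ENNReal.ofReal (R ^ (1 - c) / (c - 1)) := by
        apply ENNReal.ofReal_le_ofReal
        rw [integral_Ioi_rpow_of_lt (by linarith) hR]
        rw [show -c + 1 = 1 - c by ring,
          show -R ^ (1 - c) / (1 - c) = R ^ (1 - c) / (c - 1) by
            rw [div_eq_div_iff (sub_ne_zero.mpr (by linarith)) (sub_ne_zero.mpr (by linarith))]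
            ring]

lemma conv_bound (b : ℝ) (hb1 : 1 < b) (hb3 : b < 3) :
    ∃ C > 0, ∀ (w z : E3 → ℂ) (A B : ℝ),
      0 ≤ A → 0 ≤ B →
      (∀ᵐ η : E3 ∂volume, ‖w η‖ ≤ A * ‖η‖ ^ (-2 : ℝ)) →
      (∀ᵐ η : E3 ∂volume, ‖z η‖ ≤ B * ‖η‖ ^ (-b)) →
      ∀ ξ : E3, ξ ≠ 0 →
        ‖∫ η : E3, w η * z (ξ - η)‖ ≤ C * A * B * ‖ξ‖ ^ (1 - b) := by
  set κ : ℝ := kap.toReal with hκ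
  have hκ0 : 0 ≤ κ := ENNReal.toReal_nonneg
  set D : ℝ := 2 ^ (b - 1) * (1 + 1 / (3 - b) + 4 ^ b / (b - 1)) with hD
  have hD0 : 0 ≤ D := by
    apply mul_nonneg (Real.rpow_nonneg (by norm_num) _)
    have h1 : (0:ℝ) ≤ 1 / (3 - b) := div_nonneg zero_le_one (by linarith)
    have h2 : (0:ℝ) ≤ 4 ^ b / (b - 1) := by
      apply div_nonneg (Real.rpow_nonneg (by norm_num) _) (by linarith)
    linarith
  refine ⟨κ * D + 1, by have := mul_nonneg hκ0 hD0; linarith, fun w z A B hA hB hw hz ξ hξ => ?_⟩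
  set T : ℝ := ‖ξ‖ with hT
  have hT0 : 0 < T := norm_pos_iff.mpr hξ
  set R : ℝ := T / 2 with hR
  have hR0 : 0 < R := by positivity
  -- the three majorants
  set g1 : E3 → ENNReal :=
    (Metric.ball (0:E3) R).indicator
      (fun η => ENNReal.ofReal (R ^ (-b) * ‖η‖ ^ (-2:ℝ))) with hg1
  set G : E3 → ENNReal :=
    (Metric.ball (0:E3) R).indicator
      (fun u => ENNReal.ofReal (R ^ (-2:ℝ) * ‖u‖ ^ (-b))) with hG
  set g3 : E3 → ENNReal :=
    ((Metric.ball (0:E3) R)ᶜ).indicator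
      (fun η => ENNReal.ofReal (4 ^ b * ‖η‖ ^ (-(2 + b)))) with hg3
  have hg1m : Measurable g1 := by
    apply Measurable.indicator _ measurableSet_ball; fun_prop
  have hGm : Measurable G := by
    apply Measurable.indicator _ measurableSet_ball; fun_prop
  have hg3m : Measurable g3 := by
    apply Measurable.indicator _ measurableSet_ball.compl; fun_prop
  -- pointwise domination
  have hpt : ∀ η : E3, ENNReal.ofReal (‖η‖ ^ (-2:ℝ) * ‖ξ - η‖ ^ (-b))
      ≤ g1 η + G (ξ - η) + g3 η := by
    intro η
    by_cases h1 : ‖η‖ < R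
    · -- region 1
      have hfar : R ≤ ‖ξ - η‖ := by
        have := norm_sub_norm_le ξ η
        have : T - ‖η‖ ≤ ‖ξ - η‖ := this
        linarith
      have hb1' : ‖ξ - η‖ ^ (-b) ≤ R ^ (-b) :=
        Real.rpow_le_rpow_of_nonpos hR0 hfar (by linarith)
      refine le_trans ?_ (le_add_of_nonneg_right zero_le)
      refine le_trans ?_ (le_add_of_nonneg_right zero_le)
      rw [hg1, Set.indicator_of_mem (mem_ball_zero_iff.mpr h1)]
      apply ENNReal.ofReal_le_ofReal
      rw [mul_comm (R ^ (-b))]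
      exact mul_le_mul_of_nonneg_left hb1' (Real.rpow_nonneg (norm_nonneg _) _)
    · by_cases h2 : ‖ξ - η‖ < R
      · -- region 2
        have hfar : R ≤ ‖η‖ := not_lt.mp h1
        have hb2' : ‖η‖ ^ (-2:ℝ) ≤ R ^ (-2:ℝ) :=
          Real.rpow_le_rpow_of_nonpos hR0 hfar (by norm_num)
        refine le_trans ?_ (le_add_of_nonneg_right zero_le)
        refine le_trans ?_ (le_add_of_nonneg_left zero_le)
        rw [hG, Set.indicator_of_mem (mem_ball_zero_iff.mpr h2)]
        apply ENNReal.ofReal_le_ofReal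
        exact mul_le_mul_of_nonneg_right hb2' (Real.rpow_nonneg (norm_nonneg _) _)
      · -- region 3
        have hfar1 : R ≤ ‖η‖ := not_lt.mp h1
        have hfar2 : R ≤ ‖ξ - η‖ := not_lt.mp h2
        have hq : ‖η‖ / 4 ≤ ‖ξ - η‖ := by
          by_cases hcase : ‖η‖ ≤ 2 * T
          · calc ‖η‖ / 4 ≤ R := by rw [hR]; linarith
              _ ≤ ‖ξ - η‖ := hfar2
          · push_neg at hcase
            have : ‖η‖ - T ≤ ‖ξ - η‖ := by
              have := norm_sub_norm_le η ξ
              rw [← norm_sub_rev] at this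
              linarith [this]
            linarith
        have hb3' : ‖ξ - η‖ ^ (-b) ≤ 4 ^ b * ‖η‖ ^ (-b) := by
          have h1' : ‖ξ - η‖ ^ (-b) ≤ (‖η‖ / 4) ^ (-b) :=
            Real.rpow_le_rpow_of_nonpos (div_pos (lt_of_lt_of_le hR0 hfar1) (by norm_num)) hq (by linarith)
          refine h1'.trans (le_of_eq ?_)
          rw [Real.div_rpow (norm_nonneg _) (by norm_num), Real.rpow_neg (by norm_num : (0:ℝ) ≤ 4),
            div_eq_mul_inv, inv_inv, mul_comm]
        refine le_trans ?_ (le_add_of_nonneg_left zero_le)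
        rw [hg3, Set.indicator_of_mem (by
          rw [Set.mem_compl_iff, mem_ball_zero_iff]; exact not_lt.mpr hfar1)]
        apply ENNReal.ofReal_le_ofReal
        have hη0 : 0 < ‖η‖ := lt_of_lt_of_le hR0 hfar1
        calc ‖η‖ ^ (-2:ℝ) * ‖ξ - η‖ ^ (-b)
            ≤ ‖η‖ ^ (-2:ℝ) * (4 ^ b * ‖η‖ ^ (-b)) :=
              mul_le_mul_of_nonneg_left hb3' (Real.rpow_nonneg (norm_nonneg _) _)
          _ = 4 ^ b * ‖η‖ ^ (-(2 + b)) := by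
              rw [show -(2 + b) = (-2:ℝ) + -b by ring, Real.rpow_add hη0]
              ring
  -- transfer the a.e. bound on z
  have hsub : MeasurePreserving (fun η : E3 => ξ - η) volume volume :=
    Measure.measurePreserving_sub_left volume ξ
  have hz' : ∀ᵐ η : E3 ∂volume, ‖z (ξ - η)‖ ≤ B * ‖ξ - η‖ ^ (-b) :=
    hsub.quasiMeasurePreserving.tendsto_ae.eventually hz
  have hae : ∀ᵐ η : E3 ∂volume, ENNReal.ofReal ‖w η * z (ξ - η)‖
      ≤ ENNReal.ofReal (A * B) * (g1 η + G (ξ - η) + g3 η) := by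
    filter_upwards [hw, hz'] with η h1 h2
    have hnn : (0:ℝ) ≤ A * ‖η‖ ^ (-2:ℝ) := mul_nonneg hA (Real.rpow_nonneg (norm_nonneg _) _)
    have step1 : ‖w η * z (ξ - η)‖ ≤ (A * B) * (‖η‖ ^ (-2:ℝ) * ‖ξ - η‖ ^ (-b)) := by
      rw [norm_mul]
      calc ‖w η‖ * ‖z (ξ - η)‖ ≤ (A * ‖η‖ ^ (-2:ℝ)) * (B * ‖ξ - η‖ ^ (-b)) :=
            mul_le_mul h1 h2 (norm_nonneg _) hnn
        _ = (A * B) * (‖η‖ ^ (-2:ℝ) * ‖ξ - η‖ ^ (-b)) := by ring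
    calc ENNReal.ofReal ‖w η * z (ξ - η)‖
        ≤ ENNReal.ofReal ((A * B) * (‖η‖ ^ (-2:ℝ) * ‖ξ - η‖ ^ (-b))) :=
          ENNReal.ofReal_le_ofReal step1
      _ = ENNReal.ofReal (A * B) * ENNReal.ofReal (‖η‖ ^ (-2:ℝ) * ‖ξ - η‖ ^ (-b)) :=
          ENNReal.ofReal_mul (mul_nonneg hA hB)
      _ ≤ ENNReal.ofReal (A * B) * (g1 η + G (ξ - η) + g3 η) :=
          mul_le_mul_right (hpt η) _
  set t : ℝ := R ^ (1 - b) with ht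
  have ht0 : 0 ≤ t := Real.rpow_nonneg hR0.le _
  have h3b : (0:ℝ) < 3 - b := by linarith
  have hκof : kap = ENNReal.ofReal κ := (ENNReal.ofReal_toReal kap_ne_top).symm
  have hb1' : (0:ℝ) < b - 1 := by linarith
  have e1 : R ^ (-b) * R = t := by
    rw [ht, show (1:ℝ) - b = -b + 1 by ring, Real.rpow_add_one (ne_of_gt hR0)]
  have e2 : R ^ (-2:ℝ) * R ^ (3 - b) = t := by
    rw [← Real.rpow_add hR0, show (-2:ℝ) + (3 - b) = 1 - b by ring]
  have e4 : t = 2 ^ (b - 1) * T ^ (1 - b) := by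
    rw [ht, hR, Real.div_rpow hT0.le (by norm_num), div_eq_mul_inv,
      ← Real.rpow_neg (by norm_num : (0:ℝ) ≤ 2), show -(1 - b) = b - 1 by ring, mul_comm]
  -- bounds on the three lintegrals
  have hI1 : ∫⁻ η, g1 η ≤ ENNReal.ofReal (κ * t) := by
    rw [hg1, lintegral_indicator measurableSet_ball]
    simp_rw [ENNReal.ofReal_mul (Real.rpow_nonneg hR0.le (-b))]
    rw [lintegral_const_mul' _ _ ENNReal.ofReal_ne_top]
    calc ENNReal.ofReal (R ^ (-b)) *
          ∫⁻ η : E3 in Metric.ball 0 R, ENNReal.ofReal (‖η‖ ^ (-2:ℝ))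
        ≤ ENNReal.ofReal (R ^ (-b)) * (kap * ENNReal.ofReal R) :=
          mul_le_mul_right (L2a hR0) _
      _ = ENNReal.ofReal (κ * t) := by
          rw [hκof, ← ENNReal.ofReal_mul hκ0, ← ENNReal.ofReal_mul (Real.rpow_nonneg hR0.le _)]
          congr 1
          rw [← e1]; ring
  have hI2 : ∫⁻ η, G η ≤ ENNReal.ofReal (κ * t * (1 / (3 - b))) := by
    rw [hG, lintegral_indicator measurableSet_ball]
    simp_rw [ENNReal.ofReal_mul (Real.rpow_nonneg hR0.le (-2:ℝ))]
    rw [lintegral_const_mul' _ _ ENNReal.ofReal_ne_top]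
    calc ENNReal.ofReal (R ^ (-2:ℝ)) *
          ∫⁻ η : E3 in Metric.ball 0 R, ENNReal.ofReal (‖η‖ ^ (-b))
        ≤ ENNReal.ofReal (R ^ (-2:ℝ)) * (kap * ENNReal.ofReal (R ^ (3 - b) / (3 - b))) :=
          mul_le_mul_right (L2b hb1 hb3 hR0) _
      _ = ENNReal.ofReal (κ * t * (1 / (3 - b))) := by
          rw [hκof, ← ENNReal.ofReal_mul hκ0, ← ENNReal.ofReal_mul (Real.rpow_nonneg hR0.le _)]
          congr 1
          rw [← e2]; ring
  have hI3 : ∫⁻ η, g3 η ≤ ENNReal.ofReal (κ * t * (4 ^ b / (b - 1))) := by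
    rw [hg3, lintegral_indicator measurableSet_ball.compl]
    simp_rw [ENNReal.ofReal_mul (Real.rpow_nonneg (by norm_num : (0:ℝ) ≤ 4) b)]
    rw [lintegral_const_mul' _ _ ENNReal.ofReal_ne_top]
    calc ENNReal.ofReal ((4:ℝ) ^ b) *
          ∫⁻ η : E3 in (Metric.ball 0 R)ᶜ, ENNReal.ofReal (‖η‖ ^ (-(2 + b)))
        ≤ ENNReal.ofReal ((4:ℝ) ^ b) * (kap * ENNReal.ofReal (R ^ (1 - b) / (b - 1))) :=
          mul_le_mul_right (L2c hb1 hR0) _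
      _ = ENNReal.ofReal (κ * t * (4 ^ b / (b - 1))) := by
          rw [hκof, ← ENNReal.ofReal_mul hκ0,
            ← ENNReal.ofReal_mul (Real.rpow_nonneg (by norm_num : (0:ℝ) ≤ 4) b)]
          congr 1
          rw [ht]; ring
  have hGcomp : ∫⁻ η, G (ξ - η) = ∫⁻ u, G u := hsub.lintegral_comp hGm
  -- sum of real bounds
  have hsum0 : (0:ℝ) ≤ κ * t := mul_nonneg hκ0 ht0
  have hsum1 : (0:ℝ) ≤ κ * t * (1 / (3 - b)) :=
    mul_nonneg hsum0 (div_nonneg zero_le_one h3b.le)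
  have hsum2 : (0:ℝ) ≤ κ * t * (4 ^ b / (b - 1)) :=
    mul_nonneg hsum0 (div_nonneg (Real.rpow_nonneg (by norm_num) _) hb1'.le)
  have hS : κ * t + κ * t * (1 / (3 - b)) + κ * t * (4 ^ b / (b - 1))
      = κ * D * T ^ (1 - b) := by
    rw [hD, e4]; ring
  have hC : κ * D * T ^ (1 - b) ≤ (κ * D + 1) * T ^ (1 - b) :=
    mul_le_mul_of_nonneg_right (by linarith) (Real.rpow_nonneg hT0.le _)
  -- main chain
  have hchain : ∫⁻ η, ENNReal.ofReal ‖w η * z (ξ - η)‖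
      ≤ ENNReal.ofReal ((κ * D + 1) * A * B * T ^ (1 - b)) := by
    calc ∫⁻ η, ENNReal.ofReal ‖w η * z (ξ - η)‖
        ≤ ∫⁻ η, ENNReal.ofReal (A * B) * (g1 η + G (ξ - η) + g3 η) :=
          lintegral_mono_ae hae
      _ = ENNReal.ofReal (A * B) * ∫⁻ η, (g1 η + G (ξ - η) + g3 η) :=
          lintegral_const_mul' _ _ ENNReal.ofReal_ne_top
      _ = ENNReal.ofReal (A * B) *
          ((∫⁻ η, g1 η) + (∫⁻ η, G (ξ - η)) + ∫⁻ η, g3 η) := by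
          rw [lintegral_add_left (show Measurable fun η : E3 => g1 η + G (ξ - η) from
              hg1m.add (hGm.comp (measurable_const.sub measurable_id))),
            lintegral_add_left hg1m]
      _ ≤ ENNReal.ofReal (A * B) *
          (ENNReal.ofReal (κ * t) + ENNReal.ofReal (κ * t * (1 / (3 - b)))
            + ENNReal.ofReal (κ * t * (4 ^ b / (b - 1)))) := by
          apply mul_le_mul_right
          rw [hGcomp]
          exact add_le_add (add_le_add hI1 hI2) hI3
      _ = ENNReal.ofReal (A * B) * ENNReal.ofReal (κ * D * T ^ (1 - b)) := by
          rw [← ENNReal.ofReal_add hsum0 hsum1, ← ENNReal.ofReal_add (by linarith) hsum2, hS]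
      _ ≤ ENNReal.ofReal (A * B) * ENNReal.ofReal ((κ * D + 1) * T ^ (1 - b)) :=
          mul_le_mul_right (ENNReal.ofReal_le_ofReal hC) _
      _ = ENNReal.ofReal ((κ * D + 1) * A * B * T ^ (1 - b)) := by
          rw [← ENNReal.ofReal_mul (mul_nonneg hA hB)]
          congr 1
          ring
  calc ‖∫ η : E3, w η * z (ξ - η)‖
      ≤ (∫⁻ η, ENNReal.ofReal ‖w η * z (ξ - η)‖).toReal :=
        norm_integral_le_lintegral_norm _
    _ ≤ (κ * D + 1) * A * B * T ^ (1 - b) := by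
        apply ENNReal.toReal_le_of_le_ofReal _ hchain
        have h1 : (0:ℝ) ≤ κ * D + 1 := by nlinarith [mul_nonneg hκ0 hD0]
        positivity

lemma coord_le (ξ : E3) (j : Fin 3) : |ξ j| ≤ ‖ξ‖ := by
  rw [EuclideanSpace.norm_eq, ← Real.sqrt_sq (abs_nonneg (ξ j))]
  apply Real.sqrt_le_sqrt
  have := Finset.single_le_sum (f := fun i => ‖ξ i‖ ^ 2)
    (fun i _ => by positivity) (Finset.mem_univ j)
  simpa [Real.norm_eq_abs, sq_abs] using this

/-- Key bilinear convolution estimate for the stationary form `B_E`: for `b ∈ (1,3)` there are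
constants `C(b), C'(b) > 0` such that if `|ŵ(η)| ≤ A|η|^{-2}` and `|ẑ(η)| ≤ B|η|^{-b}` a.e.,
then `|∫ ŵ(η)ẑ(ξ-η) dη| ≤ C A B |ξ|^{1-b}` for every `ξ ≠ 0`, and consequently
`|ξ|^b |(iξ_j/|ξ|²) P̂(ξ)_{jk} ∫ ŵ(η)ẑ(ξ-η) dη| ≤ C' A B`. -/
theorem stmt_18 (b : ℝ) (hb1 : 1 < b) (hb3 : b < 3) :
    ∃ C > 0, ∃ C' > 0, ∀ (w z : EuclideanSpace ℝ (Fin 3) → ℂ) (A B : ℝ),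
      0 ≤ A → 0 ≤ B →
      (∀ᵐ η : EuclideanSpace ℝ (Fin 3) ∂volume, ‖w η‖ ≤ A * ‖η‖ ^ (-2 : ℝ)) →
      (∀ᵐ η : EuclideanSpace ℝ (Fin 3) ∂volume, ‖z η‖ ≤ B * ‖η‖ ^ (-b)) →
      ∀ ξ : EuclideanSpace ℝ (Fin 3), ξ ≠ 0 →
        ‖∫ η : EuclideanSpace ℝ (Fin 3), w η * z (ξ - η)‖ ≤ C * A * B * ‖ξ‖ ^ (1 - b) ∧
        ∀ j k : Fin 3,
          ‖ξ‖ ^ b *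
              ‖Complex.I * (ξ j : ℂ) / ((‖ξ‖ ^ 2 : ℝ) : ℂ) *
                ((((if j = k then (1 : ℝ) else 0) - ξ j * ξ k / ‖ξ‖ ^ 2 : ℝ)) : ℂ) *
                ∫ η : EuclideanSpace ℝ (Fin 3), w η * z (ξ - η)‖ ≤ C' * A * B := by
  obtain ⟨C, hC, hbound⟩ := conv_bound b hb1 hb3
  refine ⟨C, hC, 2 * C, by linarith, fun w z A B hA hB hw hz ξ hξ => ?_⟩
  have hI := hbound w z A B hA hB hw hz ξ hξ
  refine ⟨hI, fun j k => ?_⟩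
  set N : ℝ := ‖ξ‖ with hNdef
  have hN : 0 < N := norm_pos_iff.mpr hξ
  set Iv : ℂ := ∫ η : EuclideanSpace ℝ (Fin 3), w η * z (ξ - η) with hIv
  set P : ℝ := (if j = k then (1 : ℝ) else 0) - ξ j * ξ k / ‖ξ‖ ^ 2 with hP
  have hPle : |P| ≤ 2 := by
    have h1 : |ξ j * ξ k / ‖ξ‖ ^ 2| ≤ 1 := by
      rw [abs_div, abs_mul, abs_of_nonneg (by positivity : (0:ℝ) ≤ ‖ξ‖ ^ 2)]
      rw [div_le_one (by positivity)]
      calc |ξ j| * |ξ k| ≤ ‖ξ‖ * ‖ξ‖ :=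
            mul_le_mul (coord_le ξ j) (coord_le ξ k) (abs_nonneg _) (norm_nonneg _)
        _ = ‖ξ‖ ^ 2 := (sq ‖ξ‖).symm
    have h2 : |(if j = k then (1:ℝ) else 0)| ≤ 1 := by
      by_cases h : j = k <;> simp [h]
    calc |P| ≤ |(if j = k then (1:ℝ) else 0)| + |ξ j * ξ k / ‖ξ‖ ^ 2| := abs_sub _ _
      _ ≤ 2 := by linarith
  have hnorm : ‖Complex.I * (ξ j : ℂ) / ((‖ξ‖ ^ 2 : ℝ) : ℂ) * (P : ℂ) * Iv‖
      = |ξ j| / N ^ 2 * |P| * ‖Iv‖ := by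
    rw [norm_mul, norm_mul, norm_div, norm_mul, Complex.norm_I, one_mul,
      Complex.norm_real, Complex.norm_real, Complex.norm_real, Real.norm_eq_abs,
      Real.norm_eq_abs, Real.norm_eq_abs,
      abs_of_nonneg (by positivity : (0:ℝ) ≤ ‖ξ‖ ^ 2)]
  rw [hnorm]
  have hNb : N ^ b * N ^ (1 - b) = N := by
    rw [← Real.rpow_add hN]
    norm_num
  have hIv0 : ‖Iv‖ ≤ C * A * B * N ^ (1 - b) := hI
  calc N ^ b * (|ξ j| / N ^ 2 * |P| * ‖Iv‖)
      ≤ N ^ b * (N / N ^ 2 * 2 * (C * A * B * N ^ (1 - b))) := by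
        gcongr <;> first | exact coord_le ξ j | exact hPle | exact hIv0 | positivity
    _ = 2 * C * A * B * (N ^ b * N ^ (1 - b) * N / N ^ 2) := by ring
    _ = 2 * C * A * B := by
        rw [hNb, sq, div_self (by positivity : N * N ≠ 0), mul_one]
  -- done
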